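/- arXiv:1201.0179 — 2 statements merged into one kernel-verified Lean document; each statement's English description precedes it below -/
import Mathlib

section
/- Let 0 < s < s' ≤ 1. There exists a constant C > 0, depending only on s and s', such that for every normed vector space X, every T with 0 < T ≤ 1, every M ≥ 0, and every function f : ℝ → X which is Hölder continuous on [0,T] with exponent s' and constant M, one has ( ∫₀^T ‖f(t)‖² dt + ∫₀^T ∫₀^T ‖f(t) − f(τ)‖² / |t − τ|^{2s+1} dt dτ )^{1/2} ≤ C · T^{1/2} · ( sup_{t ∈ [0,T]} ‖f(t)‖ + M ), where f is additionally assumed bounded on [0,T]. -/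
/-!
The `L²` part is at most `T · sup ‖f‖²`. In the seminorm, Hölder continuity bounds the integrand
by `M² |t - τ| ^ (2 (s' - s) - 1)`, which is integrable because `s < s'`; each inner integral is
then at most `T ^ (2 (s' - s)) / (s' - s) ≤ 1 / (s' - s)`, and the outer one contributes the factor
`T`. Hence `C = √(1 + 1 / (s' - s))` works.
-/

open MeasureTheory Set intervalIntegral

lemma intervalIntegrable_abs_rpow {r : ℝ} (hr : -1 < r) (a b : ℝ) :
    IntervalIntegrable (fun x => |x| ^ r) volume a b := by
  have from_zero : ∀ c, 0 ≤ c → IntervalIntegrable (fun x => |x| ^ r) volume 0 c := fun c hc =>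
    (intervalIntegrable_rpow' hr).congr fun x hx => by
      rw [uIoc_of_le hc] at hx
      simp [abs_of_pos hx.1]
  have even : ∀ c, IntervalIntegrable (fun x => |x| ^ r) volume 0 c := by
    intro c
    rcases le_total 0 c with hc | hc
    · exact from_zero c hc
    · simpa using (IntervalIntegrable.iff_comp_neg (by simp)).mp (from_zero (-c) (by linarith))
  exact (even a).symm.trans (even b)

lemma intervalIntegrable_abs_sub_rpow {r : ℝ} (hr : -1 < r) (a b c : ℝ) :
    IntervalIntegrable (fun x => |x - c| ^ r) volume a b := by
  simpa using (intervalIntegrable_abs_rpow hr (a - c) (b - c)).comp_sub_right c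

lemma integral_abs_rpow_of_nonneg {r : ℝ} (hr : -1 < r) {b : ℝ} (hb : 0 ≤ b) :
    ∫ x in (0 : ℝ)..b, |x| ^ r = b ^ (r + 1) / (r + 1) := by
  have : ∫ x in (0 : ℝ)..b, |x| ^ r = ∫ x in (0 : ℝ)..b, x ^ r :=
    integral_congr fun x hx => by
      rw [uIcc_of_le hb] at hx
      simp [abs_of_nonneg hx.1]
  rw [this, integral_rpow (Or.inl hr), Real.zero_rpow (by linarith), sub_zero]

lemma integral_abs_sub_rpow {r : ℝ} (hr : -1 < r) {a b c : ℝ} (hac : a ≤ c) (hcb : c ≤ b) :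
    ∫ x in a..b, |x - c| ^ r = ((c - a) ^ (r + 1) + (b - c) ^ (r + 1)) / (r + 1) := by
  have left : ∫ x in a..c, |x - c| ^ r = (c - a) ^ (r + 1) / (r + 1) := by
    simp_rw [abs_sub_comm _ c]
    rw [integral_comp_sub_left (fun x => |x| ^ r), sub_self,
      integral_abs_rpow_of_nonneg hr (sub_nonneg.2 hac)]
  have right : ∫ x in c..b, |x - c| ^ r = (b - c) ^ (r + 1) / (r + 1) := by
    rw [integral_comp_sub_right (fun x => |x| ^ r), sub_self,
      integral_abs_rpow_of_nonneg hr (sub_nonneg.2 hcb)]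
  rw [← integral_add_adjacent_intervals (intervalIntegrable_abs_sub_rpow hr a c c)
    (intervalIntegrable_abs_sub_rpow hr c b c), left, right, add_div]

lemma setIntegral_Icc_abs_sub_rpow_le {r : ℝ} (hr : -1 < r) {a b c : ℝ} (hc : c ∈ Icc a b) :
    ∫ x in Icc a b, |x - c| ^ r ≤ 2 * (b - a) ^ (r + 1) / (r + 1) := by
  have hr' : 0 ≤ r + 1 := by linarith
  rw [integral_Icc_eq_integral_Ioc, ← integral_of_le (hc.1.trans hc.2),
    integral_abs_sub_rpow hr hc.1 hc.2, two_mul]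
  gcongr <;> linarith [hc.1, hc.2]

lemma setIntegral_le_mul_measureReal {α : Type*} [MeasurableSpace α] {μ : Measure α} {s : Set α}
    (hs : μ s < ⊤) {g : α → ℝ} {C : ℝ} (hg0 : ∀ x ∈ s, 0 ≤ g x) (hgC : ∀ x ∈ s, g x ≤ C) :
    ∫ x in s, g x ∂μ ≤ C * μ.real s :=
  (Real.le_norm_self _).trans <| norm_setIntegral_le_of_norm_le_const hs fun x hx => by
    rw [Real.norm_of_nonneg (hg0 x hx)]
    exact hgC x hx

lemma sq_div_rpow_le_of_le_mul_rpow {x d M p q : ℝ} (hx : 0 < x) (hd : 0 ≤ d)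
    (h : d ≤ M * x ^ p) : d ^ 2 / x ^ q ≤ M ^ 2 * x ^ (2 * p - q) := by
  have hsq : d ^ 2 ≤ M ^ 2 * x ^ (2 * p) := by
    calc d ^ 2 ≤ (M * x ^ p) ^ 2 := pow_le_pow_left₀ hd h 2
      _ = M ^ 2 * x ^ (2 * p) := by
        rw [mul_pow, ← Real.rpow_two (x ^ p), ← Real.rpow_mul hx.le, mul_comm p]
  calc d ^ 2 / x ^ q ≤ M ^ 2 * x ^ (2 * p) / x ^ q := by gcongr
    _ = M ^ 2 * x ^ (2 * p - q) := by rw [mul_div_assoc, Real.rpow_sub hx]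

section

variable {X : Type*} [NormedAddCommGroup X] {f : ℝ → X} {a b s p M : ℝ}

lemma setIntegral_Icc_sq_norm_le {S : ℝ} (hab : a ≤ b) (hS : ∀ t ∈ Icc a b, ‖f t‖ ≤ S) :
    ∫ t in Icc a b, ‖f t‖ ^ 2 ≤ S ^ 2 * (b - a) := by
  have := setIntegral_le_mul_measureReal (measure_Icc_lt_top (μ := volume))
    (fun t _ => by positivity) fun t ht => pow_le_pow_left₀ (norm_nonneg (f t)) (hS t ht) 2
  rwa [Real.volume_real_Icc_of_le hab] at this

lemma integral_sq_norm_sub_div_rpow_le_of_holder (hsp : s < p)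
    (hf : ∀ t ∈ Icc a b, ∀ τ ∈ Icc a b, ‖f t - f τ‖ ≤ M * |t - τ| ^ p) {τ : ℝ}
    (hτ : τ ∈ Icc a b) :
    ∫ t in Icc a b, ‖f t - f τ‖ ^ 2 / |t - τ| ^ (2 * s + 1) ≤
      M ^ 2 * (b - a) ^ (2 * (p - s)) / (p - s) := by
  set r := 2 * p - (2 * s + 1)
  have hr : -1 < r := by linarith
  have bound : ∀ t ∈ Icc a b,
      ‖f t - f τ‖ ^ 2 / |t - τ| ^ (2 * s + 1) ≤ M ^ 2 * |t - τ| ^ r := by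
    intro t ht
    rcases eq_or_ne t τ with rfl | hne
    · simp only [sub_self, norm_zero, zero_pow two_ne_zero, zero_div]
      positivity
    · exact sq_div_rpow_le_of_le_mul_rpow (abs_pos.2 (sub_ne_zero.2 hne)) (norm_nonneg _)
        (hf t ht τ hτ)
  have integrable : IntegrableOn (fun t => |t - τ| ^ r) (Icc a b) := by
    rw [integrableOn_Icc_iff_integrableOn_Ioc]
    exact (intervalIntegrable_abs_sub_rpow hr a b τ).1
  calc ∫ t in Icc a b, ‖f t - f τ‖ ^ 2 / |t - τ| ^ (2 * s + 1)
      ≤ ∫ t in Icc a b, M ^ 2 * |t - τ| ^ r :=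
        integral_mono_of_nonneg (ae_of_all _ fun t => by positivity) (integrable.const_mul _)
          (ae_restrict_of_forall_mem measurableSet_Icc bound)
    _ = M ^ 2 * ∫ t in Icc a b, |t - τ| ^ r := integral_const_mul _ _
    _ ≤ M ^ 2 * (2 * (b - a) ^ (r + 1) / (r + 1)) := by
        gcongr
        exact setIntegral_Icc_abs_sub_rpow_le hr hτ
    _ = M ^ 2 * (b - a) ^ (2 * (p - s)) / (p - s) := by
        have hrs : r + 1 = 2 * (p - s) := by ring
        rw [hrs]
        field_simp

lemma integral_integral_sq_norm_sub_div_rpow_le_of_holder (hsp : s < p)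
    (hf : ∀ t ∈ Icc a b, ∀ τ ∈ Icc a b, ‖f t - f τ‖ ≤ M * |t - τ| ^ p) (hab : a ≤ b) :
    ∫ τ in Icc a b, ∫ t in Icc a b, ‖f t - f τ‖ ^ 2 / |t - τ| ^ (2 * s + 1) ≤
      M ^ 2 * (b - a) ^ (2 * (p - s)) / (p - s) * (b - a) := by
  have := setIntegral_le_mul_measureReal (measure_Icc_lt_top (μ := volume))
    (fun τ _ => setIntegral_nonneg measurableSet_Icc fun t _ => by positivity)
    fun τ hτ => integral_sq_norm_sub_div_rpow_le_of_holder hsp hf hτ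
  rwa [Real.volume_real_Icc_of_le hab] at this

end

universe u

theorem Hs_norm_le_of_holder_general (s s' : ℝ) (hss' : s < s') :
    ∃ C : ℝ, 0 < C ∧
      ∀ (X : Type u) [NormedAddCommGroup X] [NormedSpace ℝ X],
        ∀ (T M : ℝ), 0 < T → T ≤ 1 → 0 ≤ M →
          ∀ f : ℝ → X,
            (∀ t ∈ Set.Icc (0:ℝ) T, ∀ τ ∈ Set.Icc (0:ℝ) T,
              ‖f t - f τ‖ ≤ M * |t - τ| ^ s') →
            BddAbove ((fun t => ‖f t‖) '' Set.Icc (0:ℝ) T) →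
            Real.sqrt ((∫ t in Set.Icc (0:ℝ) T, ‖f t‖ ^ 2) +
                ∫ τ in Set.Icc (0:ℝ) T, ∫ t in Set.Icc (0:ℝ) T,
                  ‖f t - f τ‖ ^ 2 / |t - τ| ^ (2*s + 1)) ≤
              C * Real.sqrt T *
                (sSup ((fun t => ‖f t‖) '' Set.Icc (0:ℝ) T) + M) := by
  have hK : 0 < (s' - s)⁻¹ := inv_pos.2 (sub_pos.2 hss')
  refine ⟨Real.sqrt (1 + (s' - s)⁻¹), Real.sqrt_pos.2 (by positivity), ?_⟩
  intro X _ _ T M hT hT1 hM f hf hbdd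
  set S := sSup ((fun t => ‖f t‖) '' Icc (0:ℝ) T)
  have hS : ∀ t ∈ Icc (0:ℝ) T, ‖f t‖ ≤ S := fun t ht => le_csSup hbdd (mem_image_of_mem _ ht)
  have hS0 : 0 ≤ S := (norm_nonneg _).trans (hS 0 ⟨le_rfl, hT.le⟩)
  have L2 := setIntegral_Icc_sq_norm_le hT.le hS
  rw [sub_zero] at L2
  have seminorm : ∫ τ in Icc (0:ℝ) T, ∫ t in Icc (0:ℝ) T,
      ‖f t - f τ‖ ^ 2 / |t - τ| ^ (2 * s + 1) ≤ M ^ 2 * (s' - s)⁻¹ * T := by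
    refine (integral_integral_sq_norm_sub_div_rpow_le_of_holder hss' hf hT.le).trans ?_
    rw [sub_zero, div_eq_mul_inv]
    gcongr
    exact mul_le_of_le_one_right (sq_nonneg M) (Real.rpow_le_one hT.le hT1 (by linarith))
  have total : (∫ t in Icc (0:ℝ) T, ‖f t‖ ^ 2) + (∫ τ in Icc (0:ℝ) T, ∫ t in Icc (0:ℝ) T,
      ‖f t - f τ‖ ^ 2 / |t - τ| ^ (2 * s + 1)) ≤ (1 + (s' - s)⁻¹) * ((S + M) ^ 2 * T) := by
    have hS2 : S ^ 2 ≤ (S + M) ^ 2 := by gcongr; linarith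
    have hM2 : M ^ 2 ≤ (S + M) ^ 2 := by gcongr; linarith
    calc _ ≤ S ^ 2 * T + M ^ 2 * (s' - s)⁻¹ * T := add_le_add L2 seminorm
      _ ≤ (S + M) ^ 2 * T + (S + M) ^ 2 * (s' - s)⁻¹ * T := by gcongr
      _ = _ := by ring
  calc _ ≤ Real.sqrt ((1 + (s' - s)⁻¹) * ((S + M) ^ 2 * T)) := Real.sqrt_le_sqrt total
    _ = Real.sqrt (1 + (s' - s)⁻¹) * Real.sqrt T * (S + M) := by
      rw [Real.sqrt_mul (by positivity), Real.sqrt_mul (by positivity),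
        Real.sqrt_sq (by positivity)]
      ring

/-- Estimate (2.5): `‖f‖_{H^s(0,T;X)} ≤ C_{s,s'} T^(1/2) ‖f‖_{C^{s'}([0,T];X)}`
for all `0 < T ≤ 1` and all `f` Hölder continuous on `[0,T]` with exponent `s'`
and constant `M`, where `0 < s < s' ≤ 1` and `C` depends only on `s, s'`. -/
theorem Hs_norm_le_of_holder (s s' : ℝ) (hs : 0 < s) (hss' : s < s') (hs' : s' ≤ 1) :
    ∃ C : ℝ, 0 < C ∧
      ∀ (X : Type u) [NormedAddCommGroup X] [NormedSpace ℝ X],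
        ∀ (T M : ℝ), 0 < T → T ≤ 1 → 0 ≤ M →
          ∀ f : ℝ → X,
            (∀ t ∈ Set.Icc (0:ℝ) T, ∀ τ ∈ Set.Icc (0:ℝ) T,
              ‖f t - f τ‖ ≤ M * |t - τ| ^ s') →
            BddAbove ((fun t => ‖f t‖) '' Set.Icc (0:ℝ) T) →
            Real.sqrt ((∫ t in Set.Icc (0:ℝ) T, ‖f t‖ ^ 2) +
                ∫ τ in Set.Icc (0:ℝ) T, ∫ t in Set.Icc (0:ℝ) T,
                  ‖f t - f τ‖ ^ 2 / |t - τ| ^ (2*s + 1)) ≤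
              C * Real.sqrt T *
                (sSup ((fun t => ‖f t‖) '' Set.Icc (0:ℝ) T) + M) :=
  Hs_norm_le_of_holder_general s s' hss'
end

section
/- Let E be a real inner product space, R > 0, and x ∈ E with ‖x‖ = R. Define g : ℝ × E → ℝ by g(y₀, y) = ⟨x, y⟩/R − R + √((⟨x, y⟩/R)² + (R + y₀)² − ‖y‖²). Then g(0, 0) = 0, g is Fréchet differentiable at (0, 0), and its Fréchet derivative at (0, 0) is the continuous linear map (w₀, w) ↦ w₀ + ⟨x, w⟩/R. -/
/-!
Write `g = ℓ - R + √q` with `ℓ (y₀, y) = ⟪x, y⟫ / R` linear and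
`q = ℓ² + (R + y₀)² - ‖y‖²`. The terms `ℓ²` and `‖y‖²` vanish to second order at the origin, so
`q` has derivative `2R • (w₀, w) ↦ w₀` there, and since `q (0, 0) = R²` the chain rule for `√`
divides this by `2R`.
-/

open scoped RealInnerProductSpace

theorem HasFDerivAt.sq_of_eq_zero {𝕜 G : Type*} [NontriviallyNormedField 𝕜]
    [NormedAddCommGroup G] [NormedSpace 𝕜 G] {a : G} {f : G → 𝕜} {f' : G →L[𝕜] 𝕜}
    (hf : HasFDerivAt f f' a) (h₀ : f a = 0) :
    HasFDerivAt (fun y => f y ^ 2) (0 : G →L[𝕜] 𝕜) a := by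
  refine (hf.pow 2).congr_fderiv ?_
  rw [h₀]
  ext
  simp

theorem HasFDerivAt.norm_sq_of_eq_zero {G F : Type*} [NormedAddCommGroup G] [NormedSpace ℝ G]
    [NormedAddCommGroup F] [InnerProductSpace ℝ F] {a : G} {f : G → F} {f' : G →L[ℝ] F}
    (hf : HasFDerivAt f f' a) (h₀ : f a = 0) :
    HasFDerivAt (fun y => ‖f y‖ ^ 2) (0 : G →L[ℝ] ℝ) a := by
  simpa [h₀] using hf.norm_sq

theorem HasFDerivAt.sqrt_of_eq_sq {G : Type*} [NormedAddCommGroup G] [NormedSpace ℝ G]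
    {a : G} {f : G → ℝ} {L : G →L[ℝ] ℝ} {c : ℝ} (hc : 0 < c)
    (hf : HasFDerivAt f ((2 * c) • L) a) (hfa : f a = c ^ 2) :
    HasFDerivAt (fun y => √(f y)) L a := by
  have hsqrt := hf.sqrt (by rw [hfa]; positivity)
  rwa [hfa, Real.sqrt_sq hc.le, smul_smul, one_div, inv_mul_cancel₀ (by positivity), one_smul]
    at hsqrt

section HeightFunction

variable {E : Type*} [NormedAddCommGroup E] [InnerProductSpace ℝ E] (R : ℝ) (x : E)

theorem hasFDerivAt_inner_snd_div (p₀ : ℝ × E) :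
    HasFDerivAt (fun p : ℝ × E => ⟪x, p.2⟫ / R)
      (R⁻¹ • (innerSL ℝ x).comp (ContinuousLinearMap.snd ℝ ℝ E)) p₀ := by
  convert (R⁻¹ • (innerSL ℝ x).comp (ContinuousLinearMap.snd ℝ ℝ E)).hasFDerivAt using 1
  ext p
  simp [div_eq_inv_mul]

theorem hasFDerivAt_height_radicand_zero :
    HasFDerivAt (fun p : ℝ × E => (⟪x, p.2⟫ / R) ^ 2 + (R + p.1) ^ 2 - ‖p.2‖ ^ 2)
      ((2 * R) • ContinuousLinearMap.fst ℝ ℝ E) (0, 0) := by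
  have hshift : HasFDerivAt (fun p : ℝ × E => (R + p.1) ^ 2)
      ((2 * R) • ContinuousLinearMap.fst ℝ ℝ E) (0, 0) := by
    simpa using ((hasFDerivAt_fst (𝕜 := ℝ) (p := ((0, 0) : ℝ × E))).const_add R).pow 2
  refine ((((hasFDerivAt_inner_snd_div R x (0, 0)).sq_of_eq_zero (by simp)).add hshift).sub
      ((hasFDerivAt_snd (p := ((0, 0) : ℝ × E))).norm_sq_of_eq_zero rfl)).congr_fderiv ?_
  simp

end HeightFunction

theorem hanzawa_height_fderiv_at_zero_general
    (E : Type*) [NormedAddCommGroup E] [InnerProductSpace ℝ E]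
    (R : ℝ) (hR : 0 < R) (x : E) :
    ∃ L : ℝ × E →L[ℝ] ℝ,
      (∀ (w₀ : ℝ) (w : E), L (w₀, w) = w₀ + ⟪x, w⟫ / R) ∧
      (fun p : ℝ × E =>
          ⟪x, p.2⟫ / R - R +
            Real.sqrt ((⟪x, p.2⟫ / R) ^ 2 + (R + p.1) ^ 2 - ‖p.2‖ ^ 2)) (0, 0) = 0 ∧
      HasFDerivAt
        (fun p : ℝ × E =>
          ⟪x, p.2⟫ / R - R +
            Real.sqrt ((⟪x, p.2⟫ / R) ^ 2 + (R + p.1) ^ 2 - ‖p.2‖ ^ 2))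
        L (0, 0) := by
  have hℓ := (hasFDerivAt_inner_snd_div R x (0, 0)).sub_const R
  have hroot := (hasFDerivAt_height_radicand_zero R x).sqrt_of_eq_sq hR (by simp)
  refine ⟨_, fun w₀ w => ?_, by simp [Real.sqrt_sq hR.le], hℓ.add hroot⟩
  simp [div_eq_inv_mul, add_comm]

/-- The height function `g(y₀, y) = ⟨x,y⟩/R − R + √((⟨x,y⟩/R)² + (R+y₀)² − ‖y‖²)`
satisfies `g(0,0) = 0`, is Fréchet differentiable at `(0,0)`, and its derivative
there is the continuous linear map `(w₀, w) ↦ w₀ + ⟨x,w⟩/R`. -/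
theorem hanzawa_height_fderiv_at_zero
    (E : Type*) [NormedAddCommGroup E] [InnerProductSpace ℝ E]
    (R : ℝ) (hR : 0 < R) (x : E) (hx : ‖x‖ = R) :
    ∃ L : ℝ × E →L[ℝ] ℝ,
      (∀ (w₀ : ℝ) (w : E), L (w₀, w) = w₀ + ⟪x, w⟫ / R) ∧
      (fun p : ℝ × E =>
          ⟪x, p.2⟫ / R - R +
            Real.sqrt ((⟪x, p.2⟫ / R) ^ 2 + (R + p.1) ^ 2 - ‖p.2‖ ^ 2)) (0, 0) = 0 ∧
      HasFDerivAt
        (fun p : ℝ × E =>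
          ⟪x, p.2⟫ / R - R +
            Real.sqrt ((⟪x, p.2⟫ / R) ^ 2 + (R + p.1) ^ 2 - ‖p.2‖ ^ 2))
        L (0, 0) :=
  hanzawa_height_fderiv_at_zero_general E R hR x
end
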